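/- arXiv:1010.0528 — 5 statements merged into one kernel-verified Lean document; each statement's English description precedes it below -/
import Mathlib

section
/- Let V be a complex vector space, c, h ∈ ℂ, L a Virasoro family with central charge c on V, and v a highest-weight vector of weight h. Then for all integers r ≥ 1 and s ≥ 1: (L s)^r ((L (−s))^r v) = s^r · r! · (∏_{k=1}^{r} (2h + s(k−1) + (s²−1)c/12)) • v. -/
/-!
On a highest-weight vector `v`, each `L (-n) ^ j v` is an `L 0`-eigenvector of weight `h + j n`.
Moving `L n` to the right through `L (-n) ^ (j + 1) v` produces, at each of the `j + 1` crossings,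
the commutator `[L n, L (-n)] = 2n L 0 + (c/12) n (n² - 1)` evaluated on an eigenvector, and `L n v = 0`;
summing these gives `L n (L (-n) ^ (j + 1) v) = (j + 1) n (2h + n j + (n² - 1) c / 12) • L (-n) ^ j v`.
Applying `L n` `r` times then peels off one factor per step.
-/

/-- A Virasoro family with central charge `c` on the complex vector space `V`. -/
def VirasoroFamily {V : Type*} [AddCommGroup V] [Module ℂ V]
    (c : ℂ) (L : ℤ → Module.End ℂ V) : Prop :=
  ∀ m n : ℤ,
    L m * L n - L n * L m
      = ((m : ℂ) - (n : ℂ)) • L (m + n)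
        + (if m + n = 0 then c / 12 * (m : ℂ) * ((m : ℂ) ^ 2 - 1) else 0) •
            (1 : Module.End ℂ V)

/-- A highest-weight vector of weight `h`. -/
def IsHighestWeightVector {V : Type*} [AddCommGroup V] [Module ℂ V]
    (L : ℤ → Module.End ℂ V) (h : ℂ) (v : V) : Prop :=
  (∀ n : ℤ, 1 ≤ n → L n v = 0) ∧ L 0 v = h • v

namespace VirasoroFamily

variable {V : Type*} [AddCommGroup V] [Module ℂ V] {c : ℂ} {L : ℤ → Module.End ℂ V}

theorem L_zero_apply_L (hL : VirasoroFamily c L) (n : ℤ) (x : V) :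
    L 0 (L n x) = L n (L 0 x) - (n : ℂ) • L n x := by
  have e := DFunLike.congr_fun (hL 0 n) x
  simp only [LinearMap.sub_apply, Module.End.mul_apply, LinearMap.add_apply,
    LinearMap.smul_apply, Module.End.one_apply, zero_add, Int.cast_zero, mul_zero, zero_mul, ite_self] at e
  linear_combination (norm := module) e

theorem L_apply_L_neg (hL : VirasoroFamily c L) (n : ℤ) (x : V) :
    L n (L (-n) x)
      = L (-n) (L n x) + (2 * (n : ℂ)) • L 0 x + (c / 12 * n * ((n : ℂ) ^ 2 - 1)) • x := by
  have e := DFunLike.congr_fun (hL n (-n)) x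
  simp only [add_neg_cancel, if_true, LinearMap.sub_apply, Module.End.mul_apply,
    LinearMap.add_apply, LinearMap.smul_apply, Module.End.one_apply, Int.cast_neg] at e
  linear_combination (norm := module) e

theorem L_zero_apply_L_neg_pow (hL : VirasoroFamily c L) {μ : ℂ} {w : V}
    (hw : L 0 w = μ • w) (n : ℤ) (j : ℕ) :
    L 0 ((L (-n) ^ j) w) = (μ + j * n) • (L (-n) ^ j) w := by
  induction j with
  | zero => simpa using hw
  | succ j ih =>
    rw [pow_succ', Module.End.mul_apply, hL.L_zero_apply_L, ih, map_smul]
    match_scalars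
    ring

theorem L_apply_L_neg_pow_succ (hL : VirasoroFamily c L) {h : ℂ} {v : V}
    (hv : IsHighestWeightVector L h v) {n : ℤ} (hn : 0 < n) (j : ℕ) :
    L n ((L (-n) ^ (j + 1)) v)
      = ((j + 1) * n * (2 * h + n * j + ((n : ℂ) ^ 2 - 1) * c / 12)) • (L (-n) ^ j) v := by
  induction j with
  | zero =>
    rw [pow_one, hL.L_apply_L_neg, hv.1 n hn, hv.2, map_zero, zero_add, pow_zero,
      Module.End.one_apply]
    match_scalars
    ring
  | succ j ih =>
    rw [pow_succ' _ (j + 1), Module.End.mul_apply, hL.L_apply_L_neg, ih,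
      hL.L_zero_apply_L_neg_pow hv.2, map_smul, ← Module.End.mul_apply, ← pow_succ']
    match_scalars
    ring

theorem L_pow_apply_L_neg_pow (hL : VirasoroFamily c L) {h : ℂ} {v : V}
    (hv : IsHighestWeightVector L h v) {n : ℤ} (hn : 0 < n) (r : ℕ) :
    (L n ^ r) ((L (-n) ^ r) v)
      = ((n : ℂ) ^ r * r.factorial *
          ∏ k ∈ Finset.Icc 1 r, (2 * h + n * ((k : ℂ) - 1) + ((n : ℂ) ^ 2 - 1) * c / 12)) • v := by
  induction r with
  | zero => simp
  | succ r ih =>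
    rw [pow_succ, Module.End.mul_apply, hL.L_apply_L_neg_pow_succ hv hn, map_smul, ih, smul_smul,
      Finset.prod_Icc_succ_top (by omega), Nat.factorial_succ]
    congr 1
    push_cast
    ring

end VirasoroFamily

theorem shapovalov_Ls_pow_general {V : Type*} [AddCommGroup V] [Module ℂ V]
    (c h : ℂ) (L : ℤ → Module.End ℂ V) (hL : VirasoroFamily c L)
    (v : V) (hv : IsHighestWeightVector L h v)
    (r s : ℕ) (hs : 1 ≤ s) :
    ((L (s : ℤ)) ^ r) (((L (-(s : ℤ))) ^ r) v)
      = ((s : ℂ) ^ r * (r.factorial : ℂ) *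
          ∏ k ∈ Finset.Icc 1 r,
            (2 * h + (s : ℂ) * ((k : ℂ) - 1) + ((s : ℂ) ^ 2 - 1) * c / 12)) • v := by
  simpa using hL.L_pow_apply_L_neg_pow hv (n := s) (by omega) r

/-- `(L s)^r ((L (−s))^r v) = sʳ · r! · ∏_{k=1}^{r} (2h + s(k−1) + (s²−1)c/12) • v`. -/
theorem shapovalov_Ls_pow {V : Type*} [AddCommGroup V] [Module ℂ V]
    (c h : ℂ) (L : ℤ → Module.End ℂ V) (hL : VirasoroFamily c L)
    (v : V) (hv : IsHighestWeightVector L h v)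
    (r s : ℕ) (hr : 1 ≤ r) (hs : 1 ≤ s) :
    ((L (s : ℤ)) ^ r) (((L (-(s : ℤ))) ^ r) v)
      = ((s : ℂ) ^ r * (r.factorial : ℂ) *
          ∏ k ∈ Finset.Icc 1 r,
            (2 * h + (s : ℂ) * ((k : ℂ) - 1) + ((s : ℂ) ^ 2 - 1) * c / 12)) • v :=
  shapovalov_Ls_pow_general c h L hL v hv r s hs
end

section
/- Let λ = (λ₁ ≥ λ₂ ≥ … ≥ λ_k) be a partition of n ≥ 1 and let v_λ := 𝓛_{−λ₁}(𝓛_{−λ₂}(⋯(𝓛_{−λ_k}(1))⋯)) ∈ F. Then the coefficient of the monomial x_n in v_λ is a polynomial of degree exactly one in the variable A (with coefficients in ℚ[P]). -/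
/-!
Only the part of `v_λ` linear in the `x_i` matters. The quadratic term of `𝓛_{−m}` has no
linear part, the term `(A + (m−1)P)·x_m·f` has linear part only at `x_m`, and the derivative
term sends `c·x_s` to `s·c·x_{m+s}`. So the coefficient of `x_n` in `v_λ` is `A + (λ_k − 1)P`
times the positive integers `λ_i + ⋯ + λ_k` (`2 ≤ i ≤ k`), which has degree one in `A`.
-/

open MvPolynomial

/-- The coefficient ring `R = ℚ[A, P]`: variable `0` is `A` (the Heisenberg highest
weight) and variable `1` is `P` (the background charge). -/
abbrev BosonR : Type := MvPolynomial (Fin 2) ℚ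

/-- The bosonic Fock space `F = R[x₁, x₂, …]` (the variable `x_i` is indexed by `i : ℕ`;
the variable `x_0` is never used). -/
abbrev BosonF : Type := MvPolynomial ℕ BosonR

/-- The bosonized Virasoro generator `𝓛_{−m}`:
`𝓛_{−m}(f) = (1/2)·Σ_{i,j ≥ 1, i+j=m} x_i x_j f + Σ_{j ≥ 1} j·x_{m+j}·∂f/∂x_j
+ (A + (m−1)P)·x_m·f`.  The middle sum is over the (finitely many) variables of `f`,
which captures every nonzero term since `∂f/∂x_j = 0` for `j ∉ vars f`. -/
noncomputable def bosonL (m : ℕ) (f : BosonF) : BosonF :=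
  MvPolynomial.C (MvPolynomial.C (1 / 2 : ℚ)) *
      (∑ i ∈ Finset.Ioo 0 m, MvPolynomial.X i * MvPolynomial.X (m - i)) * f
    + ∑ j ∈ f.vars.filter (fun j => 1 ≤ j),
        (j : BosonF) * MvPolynomial.X (m + j) * MvPolynomial.pderiv j f
    + MvPolynomial.C (MvPolynomial.X 0 + ((m : BosonR) - 1) * MvPolynomial.X 1) *
        MvPolynomial.X m * f

/-- `v_λ = 𝓛_{−λ₁}(𝓛_{−λ₂}(⋯(𝓛_{−λ_k}(1))⋯))` for a partition `λ₁ ≥ λ₂ ≥ ⋯ ≥ λ_k`. -/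
noncomputable def vLam {n : ℕ} (lam : n.Partition) : BosonF :=
  ((lam.parts.sort (· ≤ ·)).reverse).foldr bosonL 1

namespace MvPolynomial

variable {R σ : Type*} [CommSemiring R]

theorem coeff_zero_X_mul (i : σ) (p : MvPolynomial σ R) : coeff 0 (X i * p) = 0 := by
  classical
  simp [coeff_X_mul']

theorem coeff_single_X_mul [DecidableEq σ] (i t : σ) (p : MvPolynomial σ R) :
    coeff (Finsupp.single t 1) (X i * p) = if i = t then coeff 0 p else 0 := by
  rw [coeff_X_mul']
  by_cases h : i = t
  · subst h; simp
  · simp [h]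

theorem coeff_single_X_mul_X_mul (i j t : σ) (p : MvPolynomial σ R) :
    coeff (Finsupp.single t 1) (X i * (X j * p)) = 0 := by
  classical
  simp [coeff_single_X_mul, coeff_zero_X_mul]

theorem coeff_zero_pderiv (i : σ) (p : MvPolynomial σ R) :
    coeff 0 (pderiv i p) = coeff (Finsupp.single i 1) p := by
  simp [coeff_pderiv]

theorem coeff_single_eq_zero_of_notMem_vars {p : MvPolynomial σ R} {i : σ} (h : i ∉ p.vars)
    {k : ℕ} (hk : k ≠ 0) : coeff (Finsupp.single i k) p = 0 := by
  by_contra hne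
  exact h ((mem_vars_iff_mem_support i).2 ⟨_, mem_support_iff.2 hne, by simpa using hk⟩)

theorem degreeOf_X_add_C_mul_X [Nontrivial R] {i j : σ} (h : i ≠ j) (c : R) :
    degreeOf i (X i + C c * X j) = 1 := by
  rw [degreeOf_add_eq_of_degreeOf_lt] <;> rw [degreeOf_X_self]
  calc degreeOf i (C c * X j) ≤ degreeOf i (X j : MvPolynomial σ R) := degreeOf_C_mul_le _ _ _
    _ = 0 := degreeOf_X_of_ne h
    _ < 1 := one_pos

end MvPolynomial

theorem coeff_single_bosonL_quadratic (m t : ℕ) (f : BosonF) :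
    coeff (Finsupp.single t 1) (C (C (1 / 2 : ℚ)) *
      (∑ i ∈ Finset.Ioo 0 m, X i * X (m - i)) * f) = 0 := by
  simp [mul_assoc, Finset.sum_mul, coeff_sum, coeff_single_X_mul_X_mul]

theorem coeff_single_bosonL_one (m : ℕ) :
    coeff (Finsupp.single m 1) (bosonL m 1) = X 0 + ((m : BosonR) - 1) * X 1 := by
  rw [bosonL, coeff_add, coeff_add, coeff_single_bosonL_quadratic, mul_assoc, coeff_C_mul,
    coeff_single_X_mul]
  simp

theorem coeff_single_add_bosonL (m : ℕ) {s : ℕ} (hs : 1 ≤ s) (f : BosonF) :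
    coeff (Finsupp.single (m + s) 1) (bosonL m f) = s * coeff (Finsupp.single s 1) f := by
  have hderiv (j : ℕ) :
      coeff (Finsupp.single (m + s) 1) ((j : BosonF) * X (m + j) * pderiv j f) =
        if j = s then s * coeff (Finsupp.single s 1) f else 0 := by
    rw [← map_natCast C, mul_assoc, coeff_C_mul, coeff_single_X_mul, coeff_zero_pderiv]
    by_cases h : j = s <;> simp [h]
  rw [bosonL, coeff_add, coeff_add, coeff_single_bosonL_quadratic, coeff_sum,
    Finset.sum_congr rfl fun j _ => hderiv j, Finset.sum_ite_eq', mul_assoc, coeff_C_mul,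
    coeff_single_X_mul, if_neg (show m ≠ m + s by omega), zero_add, mul_zero, add_zero]
  split_ifs with h
  · rfl
  · rw [coeff_single_eq_zero_of_notMem_vars (fun hv => h (Finset.mem_filter.2 ⟨hv, hs⟩))
      one_ne_zero, mul_zero]

theorem degreeOf_coeff_single_sum_foldr_bosonL {l : List ℕ} (hl : l ≠ [])
    (hpos : ∀ m ∈ l, 1 ≤ m) :
    degreeOf 0 (coeff (Finsupp.single l.sum 1) (l.foldr bosonL 1)) = 1 := by
  induction l with
  | nil => exact absurd rfl hl
  | cons m l ih =>
    rcases l with _ | ⟨m', l⟩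
    · rw [List.foldr_cons, List.foldr_nil, List.sum_singleton, coeff_single_bosonL_one,
        ← map_natCast C, ← map_one C, ← map_sub]
      exact degreeOf_X_add_C_mul_X (by decide) _
    · have hs : 1 ≤ (m' :: l).sum := (hpos m' (by simp)).trans (List.le_sum_of_mem (by simp))
      rw [List.foldr_cons, List.sum_cons, coeff_single_add_bosonL m hs, ← map_natCast C,
        degreeOf_C_mul _ _ (mem_nonZeroDivisors_of_ne_zero (Nat.cast_ne_zero.2 (by omega)))]
      exact ih (by simp) fun x hx => hpos x (List.mem_cons_of_mem m hx)

/-- The coefficient of the monomial `x_n` in `v_λ` has degree exactly one in `A`. -/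
theorem coeff_xn_degree_one_in_A {n : ℕ} (hn : 1 ≤ n) (lam : n.Partition) :
    MvPolynomial.degreeOf 0
      (MvPolynomial.coeff (Finsupp.single n 1) (vLam lam)) = 1 := by
  set l := (lam.parts.sort (· ≤ ·)).reverse
  have hsum : l.sum = n := by
    rw [List.sum_reverse, ← Multiset.sum_coe, Multiset.sort_eq, lam.parts_sum]
  have hpos : ∀ m ∈ l, 1 ≤ m := fun m hm =>
    lam.parts_pos ((Multiset.mem_sort _).1 (List.mem_reverse.1 hm))
  have hl : l ≠ [] := by
    intro hl
    rw [hl, List.sum_nil] at hsum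
    omega
  have hdeg := degreeOf_coeff_single_sum_foldr_bosonL hl hpos
  rwa [hsum] at hdeg
end

section
/- Let r, s ≥ 1 be integers, let A'_{r,s}(t) := t^{1−2rs}·∏_{(k,l)∈S_{r,s}} (k + l t) ∈ ℂ[t,t⁻¹] with S_{r,s} := {(k,l) ∈ ℤ² : 1−r ≤ k ≤ r, 1−s ≤ l ≤ s} ∖ {(0,0),(r,s)}, and let A ∈ ℂ[t,t⁻¹] be nonzero with maxdeg A ≤ 2r(s−1) and mindeg A ≥ −2(r−1)s. If for every ξ ∈ ℂ∖{0} the multiplicity of ξ as a root of A is at least the multiplicity of ξ as a root of A'_{r,s}, then A = κ·A'_{r,s} for some nonzero constant κ ∈ ℂ. -/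
open LaurentPolynomial

/-- The index set `S_{r,s} = {(k,l) : 1−r ≤ k ≤ r, 1−s ≤ l ≤ s} ∖ {(0,0),(r,s)}`. -/
noncomputable def Srs (r s : ℕ) : Finset (ℤ × ℤ) :=
  (((Finset.Icc (1 - (r : ℤ)) (r : ℤ)) ×ˢ (Finset.Icc (1 - (s : ℤ)) (s : ℤ))).erase
      (0, 0)).erase ((r : ℤ), (s : ℤ))

/-- `A'_{r,s}(t) = t^{1−2rs}·∏_{(k,l)∈S_{r,s}}(k + l t)` (with complex coefficients). -/
noncomputable def Ars (r s : ℕ) : LaurentPolynomial ℂ :=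
  T (1 - 2 * ((r : ℤ) * (s : ℤ))) *
    ∏ p ∈ Srs r s,
      (LaurentPolynomial.C ((p.1 : ℂ)) + LaurentPolynomial.C ((p.2 : ℂ)) * T 1)

/-- The maximum degree of a Laurent polynomial (`⊥` for `0`). -/
noncomputable def maxdeg (a : LaurentPolynomial ℂ) : WithBot ℤ := a.coeff.support.max

/-- The minimum degree of a Laurent polynomial (`⊤` for `0`). -/
noncomputable def mindeg (a : LaurentPolynomial ℂ) : WithTop ℤ := a.coeff.support.min

/-!
Write `A = T^a · p` and `A'_{r,s} = T^b · q` with polynomials `p, q` that do not vanish at `0`.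
Since `T` is a unit, the multiplicity hypothesis says that every root of `q` is a root of `p`
of at least the same multiplicity; as `q` splits over `ℂ`, `q ∣ p`. The product defining
`A'_{r,s}` has `2r(2s-1) - 1` non-constant factors, `2s - 1` of which vanish at `0`, so the
degree bounds on `A` are exactly `maxdeg A ≤ maxdeg A'_{r,s}` and `mindeg A'_{r,s} ≤ mindeg A`,
i.e. `a + deg p ≤ b + deg q` and `b ≤ a`. With `deg q ≤ deg p` this forces `a = b` and
`p / q` constant.
-/

open Polynomial

namespace LaurentPolynomial

section Semiring

variable {R : Type*} [Semiring R]

lemma support_coeff_T_mul_toLaurent (a : ℤ) (p : R[X]) :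
    (T a * toLaurent p).coeff.support = p.support.image (fun n : ℕ => a + n) := by
  classical
  rw [T_mul, T, AddMonoidAlgebra.support_coeff_mul_single _ _ (by simp) a,
    support_coeff_toLaurent, Finset.map_map]
  ext; simp [add_comm]

lemma max_support_coeff_T_mul_toLaurent {p : R[X]} (hp : p ≠ 0) (a : ℤ) :
    (T a * toLaurent p).coeff.support.max = ((a + p.natDegree : ℤ) : WithBot ℤ) := by
  have hne : p.support.Nonempty := nonempty_support_iff.mpr hp
  rw [support_coeff_T_mul_toLaurent, ← Finset.coe_max' (hne.image _),
    Finset.max'_image (fun m n h => by simpa using h), natDegree_eq_support_max' hp]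

lemma min_support_coeff_T_mul_toLaurent {p : R[X]} (hp : p ≠ 0) (a : ℤ) :
    (T a * toLaurent p).coeff.support.min = ((a + p.natTrailingDegree : ℤ) : WithTop ℤ) := by
  have hne : p.support.Nonempty := nonempty_support_iff.mpr hp
  rw [support_coeff_T_mul_toLaurent, ← Finset.coe_min' (hne.image _),
    Finset.min'_image (fun m n h => by simpa using h), natTrailingDegree_eq_support_min' hp]

lemma exists_eq_T_mul_toLaurent {f : R[T;T⁻¹]} (hf : f ≠ 0) :
    ∃ (a : ℤ) (p : R[X]), p.coeff 0 ≠ 0 ∧ f = T a * toLaurent p := by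
  obtain ⟨n, p, hp⟩ := f.exists_T_pow
  have hf_eq : f = toLaurent p * T (-(n : ℤ)) := by
    rw [hp, mul_T_assoc, add_neg_cancel, T_zero, mul_one]
  have hp0 : p ≠ 0 := by
    rintro rfl
    exact hf (by rw [hf_eq, map_zero, zero_mul])
  set k := p.natTrailingDegree with hk
  obtain ⟨q, hq⟩ : X ^ k ∣ p :=
    X_pow_dvd_iff.mpr fun d hd => coeff_eq_zero_of_lt_natTrailingDegree hd
  refine ⟨k - n, q, ?_, ?_⟩
  · have := trailingCoeff_nonzero_iff_nonzero.mpr hp0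
    rwa [trailingCoeff, ← hk, hq, coeff_X_pow_mul', if_pos le_rfl, Nat.sub_self] at this
  · rw [hf_eq, hq, map_mul, toLaurent_X_pow, sub_eq_add_neg, T_add, mul_assoc, mul_assoc,
      T_mul (-(n : ℤ))]

end Semiring

end LaurentPolynomial

namespace Polynomial

lemma dvd_of_toLaurent_dvd_toLaurent {R : Type*} [CommSemiring R] {g p : R[X]}
    (hg : IsCoprime g X) (h : toLaurent g ∣ toLaurent p) : g ∣ p := by
  obtain ⟨f, hf⟩ := h
  obtain ⟨j, f', hf'⟩ := f.exists_T_pow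
  have : toLaurent (p * X ^ j) = toLaurent (g * f') := by
    rw [map_mul, map_mul, hf', hf, toLaurent_X_pow, mul_assoc]
  exact (hg.pow_right (n := j)).dvd_of_dvd_mul_right ⟨f', toLaurent_injective this⟩

lemma isCoprime_X_sub_C_pow_X {R : Type*} [CommRing R] {ξ : R} (hξ : IsUnit ξ) (m : ℕ) :
    IsCoprime ((X - C ξ) ^ m) X := by
  have := isCoprime_X_sub_C_of_isUnit_sub (a := ξ) (b := 0) (by rwa [sub_zero])
  rw [map_zero, sub_zero] at this
  exact this.pow_left

lemma natTrailingDegree_prod {R ι : Type*} [CommSemiring R] [NoZeroDivisors R] [Nontrivial R]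
    (s : Finset ι) (f : ι → R[X]) (h : ∀ i ∈ s, f i ≠ 0) :
    (∏ i ∈ s, f i).natTrailingDegree = ∑ i ∈ s, (f i).natTrailingDegree := by
  classical
  induction s using Finset.induction_on with
  | empty => simp
  | insert i s hi ih =>
    have hs : ∀ j ∈ s, f j ≠ 0 := fun j hj => h j (Finset.mem_insert_of_mem hj)
    rw [Finset.prod_insert hi, Finset.sum_insert hi,
      natTrailingDegree_mul (h i (Finset.mem_insert_self i s)) (Finset.prod_ne_zero_iff.mpr hs),
      ih hs]

end Polynomial

namespace LaurentPolynomial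

theorem exists_eq_C_mul_of_forall_pow_dvd {K : Type*} [Field K] [IsAlgClosed K]
    {A B : K[T;T⁻¹]} (hA : A ≠ 0) (hB : B ≠ 0)
    (hmax : A.coeff.support.max ≤ B.coeff.support.max)
    (hmin : B.coeff.support.min ≤ A.coeff.support.min)
    (hdvd : ∀ ξ : K, ξ ≠ 0 → ∀ m : ℕ,
      (T 1 - LaurentPolynomial.C ξ) ^ m ∣ B → (T 1 - LaurentPolynomial.C ξ) ^ m ∣ A) :
    ∃ κ : K, κ ≠ 0 ∧ A = LaurentPolynomial.C κ * B := by
  classical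
  obtain ⟨a, p, hp0, rfl⟩ := exists_eq_T_mul_toLaurent hA
  obtain ⟨b, q, hq0, rfl⟩ := exists_eq_T_mul_toLaurent hB
  have hp : p ≠ 0 := fun h => hp0 (by simp [h])
  have hq : q ≠ 0 := fun h => hq0 (by simp [h])
  rw [max_support_coeff_T_mul_toLaurent hp, max_support_coeff_T_mul_toLaurent hq,
    WithBot.coe_le_coe] at hmax
  rw [min_support_coeff_T_mul_toLaurent hp, min_support_coeff_T_mul_toLaurent hq,
    WithTop.coe_le_coe, natTrailingDegree_eq_zero.mpr (.inr hp0),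
    natTrailingDegree_eq_zero.mpr (.inr hq0)] at hmin
  have hmult : ∀ ξ, rootMultiplicity ξ q ≤ rootMultiplicity ξ p := by
    intro ξ
    rcases eq_or_ne ξ 0 with rfl | hξ
    · rw [rootMultiplicity_eq_zero (by simpa [coeff_zero_eq_eval_zero] using hq0)]
      exact Nat.zero_le _
    rw [le_rootMultiplicity_iff hp]
    refine dvd_of_toLaurent_dvd_toLaurent (isCoprime_X_sub_C_pow_X hξ.isUnit _) ?_
    have hB : toLaurent ((X - Polynomial.C ξ) ^ rootMultiplicity ξ q) ∣ T b * toLaurent q :=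
      (map_dvd toLaurent (pow_rootMultiplicity_dvd q ξ)).trans (dvd_mul_left _ _)
    simp only [map_pow, map_sub, toLaurent_X, toLaurent_C] at hB ⊢
    exact (isUnit_T a).dvd_mul_left.mp (hdvd ξ hξ _ hB)
  obtain ⟨c, rfl⟩ : q ∣ p := (IsAlgClosed.splits q).dvd_of_roots_le_roots hq
    (Multiset.le_iff_count.mpr fun ξ => by simpa only [count_roots] using hmult ξ)
  have hc : c ≠ 0 := right_ne_zero_of_mul hp
  rw [natDegree_mul hq hc, Nat.cast_add] at hmax
  have hab : a = b := by omega
  obtain ⟨κ, rfl⟩ : ∃ κ, c = Polynomial.C κ := ⟨_, eq_C_of_natDegree_eq_zero (by omega)⟩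
  refine ⟨κ, fun h => hc (by rw [h, map_zero]), ?_⟩
  rw [hab, map_mul, toLaurent_C]
  ring

end LaurentPolynomial

noncomputable def linFactor (p : ℤ × ℤ) : ℂ[X] :=
  Polynomial.C (p.1 : ℂ) + Polynomial.C (p.2 : ℂ) * X

lemma linFactor_ne_zero {p : ℤ × ℤ} (hp : p ≠ (0, 0)) : linFactor p ≠ 0 := by
  intro h
  have h0 := congrArg (coeff · 0) h
  have h1 := congrArg (coeff · 1) h
  simp only [linFactor, coeff_add, coeff_C, coeff_C_mul, coeff_X_zero, coeff_X_one, if_true,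
    if_neg one_ne_zero, mul_zero, mul_one, add_zero, zero_add, coeff_zero, Int.cast_eq_zero] at h0 h1
  exact hp (Prod.ext h0 h1)

lemma natDegree_linFactor (p : ℤ × ℤ) : (linFactor p).natDegree = if p.2 ≠ 0 then 1 else 0 := by
  split_ifs with h
  · rw [linFactor, add_comm]
    exact natDegree_linear (by exact_mod_cast h)
  · simp [linFactor, not_not.mp h]

lemma natTrailingDegree_linFactor {p : ℤ × ℤ} (hp : p ≠ (0, 0)) :
    (linFactor p).natTrailingDegree = if p.1 = 0 then 1 else 0 := by
  split_ifs with h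
  · have h2 : p.2 ≠ 0 := fun h2 => hp (Prod.ext h h2)
    rw [linFactor, h, Int.cast_zero, map_zero, zero_add, C_mul_X_eq_monomial,
      natTrailingDegree_monomial (by exact_mod_cast h2)]
  · simp [linFactor, h]

noncomputable def Qrs (r s : ℕ) : ℂ[X] := ∏ p ∈ Srs r s, linFactor p

lemma Ars_eq (r s : ℕ) : Ars r s = T (1 - 2 * ((r : ℤ) * s)) * toLaurent (Qrs r s) := by
  simp [Ars, Qrs, linFactor, map_prod]

lemma ne_zero_of_mem_Srs {r s : ℕ} {p : ℤ × ℤ} (hp : p ∈ Srs r s) : p ≠ (0, 0) :=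
  (Finset.mem_erase.mp (Finset.mem_erase.mp hp).2).1

lemma Qrs_ne_zero (r s : ℕ) : Qrs r s ≠ 0 :=
  Finset.prod_ne_zero_iff.mpr fun _ hp => linFactor_ne_zero (ne_zero_of_mem_Srs hp)

lemma Ars_ne_zero (r s : ℕ) : Ars r s ≠ 0 := by
  rw [Ars_eq, (isUnit_T _).mul_right_eq_zero.ne, toLaurent_ne_zero]
  exact Qrs_ne_zero r s

section Degrees

variable {r s : ℕ}

lemma card_Icc_one_sub (n : ℕ) : (Finset.Icc (1 - (n : ℤ)) n).card = 2 * n := by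
  rw [Int.card_Icc]; omega

lemma filter_snd_ne_zero_Srs :
    (Srs r s).filter (·.2 ≠ 0) =
      ((Finset.Icc (1 - (r : ℤ)) r) ×ˢ ((Finset.Icc (1 - (s : ℤ)) s).erase 0)).erase (r, s) := by
  ext ⟨k, l⟩
  simp [Srs]
  omega

lemma filter_fst_eq_zero_Srs (hr : 1 ≤ r) :
    (Srs r s).filter (·.1 = 0) = {0} ×ˢ ((Finset.Icc (1 - (s : ℤ)) s).erase 0) := by
  ext ⟨k, l⟩
  simp [Srs]
  omega

lemma natDegree_Qrs (hr : 1 ≤ r) (hs : 1 ≤ s) :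
    ((Qrs r s).natDegree : ℤ) = 2 * r * (2 * s - 1) - 1 := by
  rw [Qrs, natDegree_prod _ _ fun _ hp => linFactor_ne_zero (ne_zero_of_mem_Srs hp)]
  simp_rw [natDegree_linFactor]
  rw [Finset.sum_boole, filter_snd_ne_zero_Srs, Finset.card_erase_of_mem (by simp; omega),
    Finset.card_product, Finset.card_erase_of_mem (by simp; omega), card_Icc_one_sub,
    card_Icc_one_sub, Nat.cast_id]
  have h : 1 ≤ 2 * r * (2 * s - 1) := Nat.one_le_iff_ne_zero.mpr (by simp; omega)
  push_cast [Nat.cast_sub h, Nat.cast_sub (by omega : 1 ≤ 2 * s)]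
  ring

lemma natTrailingDegree_Qrs (hr : 1 ≤ r) (hs : 1 ≤ s) :
    ((Qrs r s).natTrailingDegree : ℤ) = 2 * s - 1 := by
  rw [Qrs, natTrailingDegree_prod _ _ fun _ hp => linFactor_ne_zero (ne_zero_of_mem_Srs hp),
    Finset.sum_congr rfl fun _ hp => natTrailingDegree_linFactor (ne_zero_of_mem_Srs hp),
    Finset.sum_boole, filter_fst_eq_zero_Srs hr, Finset.card_product,
    Finset.card_erase_of_mem (by simp; omega), card_Icc_one_sub, Finset.card_singleton, one_mul,
    Nat.cast_id]
  omega

lemma maxdeg_Ars (hr : 1 ≤ r) (hs : 1 ≤ s) :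
    maxdeg (Ars r s) = ((2 * (r : ℤ) * ((s : ℤ) - 1) : ℤ) : WithBot ℤ) := by
  rw [maxdeg, Ars_eq, max_support_coeff_T_mul_toLaurent (Qrs_ne_zero r s), natDegree_Qrs hr hs]
  congr 1
  ring

lemma mindeg_Ars (hr : 1 ≤ r) (hs : 1 ≤ s) :
    mindeg (Ars r s) = ((-(2 * ((r : ℤ) - 1) * (s : ℤ)) : ℤ) : WithTop ℤ) := by
  rw [mindeg, Ars_eq, min_support_coeff_T_mul_toLaurent (Qrs_ne_zero r s),
    natTrailingDegree_Qrs hr hs]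
  congr 1
  ring

end Degrees

/-- A nonzero Laurent polynomial `A` with `maxdeg A ≤ 2r(s−1)`, `mindeg A ≥ −2(r−1)s`
whose root multiplicities at every `ξ ∈ ℂ∖{0}` dominate those of `A'_{r,s}` is a
nonzero constant multiple of `A'_{r,s}`. -/
theorem eq_Ars_up_to_constant (r s : ℕ) (hr : 1 ≤ r) (hs : 1 ≤ s)
    (A : LaurentPolynomial ℂ) (hA : A ≠ 0)
    (hmax : maxdeg A ≤ ((2 * (r : ℤ) * ((s : ℤ) - 1) : ℤ) : WithBot ℤ))
    (hmin : ((-(2 * ((r : ℤ) - 1) * (s : ℤ)) : ℤ) : WithTop ℤ) ≤ mindeg A)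
    (hdvd : ∀ ξ : ℂ, ξ ≠ 0 → ∀ m : ℕ,
      (T 1 - LaurentPolynomial.C ξ) ^ m ∣ Ars r s →
        (T 1 - LaurentPolynomial.C ξ) ^ m ∣ A) :
    ∃ κ : ℂ, κ ≠ 0 ∧ A = LaurentPolynomial.C κ * Ars r s :=
  exists_eq_C_mul_of_forall_pow_dvd hA (Ars_ne_zero r s) (hmax.trans (maxdeg_Ars hr hs).ge)
    ((mindeg_Ars hr hs).le.trans hmin) hdvd
end

section
/- For every integer s ≥ 1, the following identity holds in ℚ[t,t⁻¹]: 2·t^{1−2s}·∏_{(k,l)∈S_{1,s}} (k + l t) = 2·s!·(s−1)!·∏_{k=1}^{s−1} (k²t² − 1), where S_{1,s} := {(k,l) ∈ ℤ² : 0 ≤ k ≤ 1, 1−s ≤ l ≤ s} ∖ {(0,0),(1,s)}. In other words, R_{1,s}(t) = 2·s!·(s−1)!·∏_{k=1}^{s−1}(k²t²−1). -/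
/-!
Write `s = m + 1` and split `S_{1,s}` by its first coordinate. The row `k = 0` contributes
`∏_{l ∈ [-m, m+1], l ≠ 0} l t = (m+1) t · ∏_{k=1}^m (k t)(-k t)` and the row `k = 1` contributes
`∏_{|l| ≤ m} (1 + l t) = ∏_{k=1}^m (1 + k t)(1 - k t)`. Pairing the factors of `±k` gives
`(k t)² (k² t² - 1)`, so the product is `(m+1) · m!² · t^(2m+1) · ∏_{k=1}^m (k² t² - 1)`,
and `t^(1-2s)` cancels the power of `t`.
-/

open LaurentPolynomial

open Finset Nat

section SymmetricProducts

variable {M : Type*} [CommMonoid M]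

theorem Finset.prod_Icc_neg_erase_zero (f : ℤ → M) (m : ℕ) :
    ∏ l ∈ (Icc (-(m : ℤ)) m).erase 0, f l = ∏ k ∈ Icc 1 m, (f k * f (-k)) := by
  induction m with
  | zero => simp
  | succ m ih =>
    have hIcc : (Icc (-((m + 1 : ℕ) : ℤ)) ((m + 1 : ℕ) : ℤ)).erase 0
        = insert ((m : ℤ) + 1) (insert (-((m : ℤ) + 1)) ((Icc (-(m : ℤ)) m).erase 0)) := by
      ext x; simp only [mem_erase, mem_Icc, mem_insert]; push_cast; omega
    rw [hIcc, prod_insert (by simp only [mem_insert, mem_erase, mem_Icc]; omega),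
      prod_insert (by simp only [mem_erase, mem_Icc]; omega), ih, prod_Icc_succ_top (by omega),
      ← mul_assoc, mul_comm]
    push_cast
    rfl

theorem Finset.prod_Icc_neg (f : ℤ → M) (m : ℕ) :
    ∏ l ∈ Icc (-(m : ℤ)) m, f l = f 0 * ∏ k ∈ Icc 1 m, (f k * f (-k)) := by
  rw [← mul_prod_erase _ _ (by simp : (0 : ℤ) ∈ Icc (-(m : ℤ)) m), prod_Icc_neg_erase_zero]

end SymmetricProducts

theorem Finset.prod_Icc_one_natCast_eq_factorial {R : Type*} [CommSemiring R] (m : ℕ) :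
    ∏ k ∈ Icc 1 m, (k : R) = m ! := by
  rw [← Nat.cast_prod, ← Ico_add_one_right_eq_Icc, prod_Ico_id_eq_factorial]

theorem Srs_one_succ (m : ℕ) :
    Srs 1 (m + 1) = {0} ×ˢ insert ((m : ℤ) + 1) ((Icc (-(m : ℤ)) m).erase 0)
      ∪ {1} ×ˢ Icc (-(m : ℤ)) m := by
  ext ⟨k, l⟩
  simp only [Srs, mem_erase, mem_product, mem_Icc, mem_union, mem_singleton, mem_insert,
    ne_eq, Prod.mk.injEq]
  push_cast
  omega

theorem prod_Srs_one_succ {R : Type*} [CommRing R] (t : R) (m : ℕ) :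
    ∏ p ∈ Srs 1 (m + 1), ((p.1 : R) + p.2 * t)
      = ((m + 1) * m ! ^ 2 : ℕ) * t ^ (2 * m + 1) * ∏ k ∈ Icc 1 m, ((k : R) ^ 2 * t ^ 2 - 1) := by
  have hdisj : Disjoint ({(0 : ℤ)} ×ˢ insert ((m : ℤ) + 1) ((Icc (-(m : ℤ)) m).erase 0))
      ({1} ×ˢ Icc (-(m : ℤ)) m) := disjoint_product.2 (Or.inl (by simp))
  rw [Srs_one_succ, prod_union hdisj, prod_product, prod_product, prod_singleton, prod_singleton,
    prod_insert (by simp), prod_Icc_neg_erase_zero, prod_Icc_neg]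
  simp only [Int.cast_zero, Int.cast_one, Int.cast_natCast, Int.cast_neg, Int.cast_add, zero_add,
    zero_mul, add_zero, one_mul]
  have hfactor : ∀ k : ℕ, (k * t) * (-k * t) * ((1 + k * t) * (1 + -k * t))
      = ((k : R) * t) ^ 2 * ((k : R) ^ 2 * t ^ 2 - 1) := fun k => by ring
  rw [mul_assoc, ← prod_mul_distrib, prod_congr rfl fun k _ => hfactor k, prod_mul_distrib,
    prod_pow, prod_mul_distrib, prod_Icc_one_natCast_eq_factorial, prod_const, Nat.card_Icc,
    Nat.add_sub_cancel]
  push_cast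
  ring

/-- `R_{1,s}(t) = 2·t^{1−2s}·∏_{(k,l)∈S_{1,s}}(k + l t) = 2·s!·(s−1)!·∏_{k=1}^{s−1}(k²t²−1)`. -/
theorem R_one_s_eq (s : ℕ) (hs : 1 ≤ s) :
    2 * T (1 - 2 * (s : ℤ)) *
        ∏ p ∈ Srs 1 s,
          (LaurentPolynomial.C ((p.1 : ℚ)) + LaurentPolynomial.C ((p.2 : ℚ)) * T 1)
      = LaurentPolynomial.C ((2 * s.factorial * (s - 1).factorial : ℕ) : ℚ) *
          ∏ k ∈ Finset.Icc 1 (s - 1),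
            (LaurentPolynomial.C ((k : ℚ) ^ 2) * T 2 - 1) := by
  obtain ⟨m, rfl⟩ : ∃ m, s = m + 1 := ⟨s - 1, by omega⟩
  have hT : (T (1 - 2 * ((m + 1 : ℕ) : ℤ)) : ℚ[T;T⁻¹]) * T 1 ^ (2 * m + 1) = 1 := by
    rw [T_pow, ← T_add, ← T_zero]
    congr 1
    push_cast
    ring
  have hT2 : (T 2 : ℚ[T;T⁻¹]) = T 1 ^ 2 := by rw [T_pow]; rfl
  simp only [map_intCast, map_natCast, map_pow, hT2]
  rw [prod_Srs_one_succ, Nat.add_sub_cancel, Nat.factorial_succ]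
  push_cast at hT ⊢
  linear_combination (2 * ((m : ℚ[T;T⁻¹]) + 1) * (m ! : ℚ[T;T⁻¹]) ^ 2 *
    ∏ k ∈ Icc 1 m, ((k : ℚ[T;T⁻¹]) ^ 2 * T 1 ^ 2 - 1)) * hT
end

section
/- Let t₀ be a nonzero complex number, V a complex vector space carrying a Virasoro family L with central charge c(t₀), and v a highest-weight vector of weight h_{2,2}(t₀). Then the vector w := L(−1)⁴ v − 2(t₀ + t₀⁻¹)·L(−2)(L(−1)² v) + (t₀² − 2 + t₀⁻²)·L(−2)² v − 2(t₀ − 3 + t₀⁻¹)·L(−3)(L(−1) v) − 3(t₀ − 2 + t₀⁻¹)·L(−4) v satisfies L(m) w = 0 for every integer m ≥ 1. (That is, P_{2,2}(t) = L_{−1}⁴ − 2(t+t⁻¹)L_{−2}L_{−1}² + (t²−2+t⁻²)L_{−2}² − 2(t−3+t⁻¹)L_{−3}L_{−1} − 3(t−2+t⁻¹)L_{−4} produces the level-4 singular vector at the highest weight (c(t), h_{2,2}(t)).) -/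
namespace VirasoroFamily

variable {V : Type*} [AddCommGroup V] [Module ℂ V] {c : ℂ} {L : ℤ → Module.End ℂ V}

theorem apply_apply (hL : VirasoroFamily c L) (m n : ℤ) (u : V) :
    L m (L n u) = L n (L m u) + ((m : ℂ) - n) • L (m + n) u
      + (if m + n = 0 then c / 12 * (m : ℂ) * ((m : ℂ) ^ 2 - 1) else 0) • u := by
  have h := LinearMap.congr_fun (hL m n) u
  simp only [LinearMap.sub_apply, Module.End.mul_apply, LinearMap.add_apply,
    LinearMap.smul_apply, Module.End.one_apply] at h
  rw [sub_eq_iff_eq_add.mp h]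
  abel

theorem apply_apply_of_add_ne_zero (hL : VirasoroFamily c L) {m n : ℤ} (hmn : m + n ≠ 0)
    (u : V) : L m (L n u) = L n (L m u) + ((m : ℂ) - n) • L (m + n) u := by
  rw [hL.apply_apply, if_neg hmn, zero_smul, add_zero]

theorem apply_one_apply_neg_one (hL : VirasoroFamily c L) (u : V) :
    L 1 (L (-1) u) = L (-1) (L 1 u) + (2 : ℂ) • L 0 u := by
  rw [hL.apply_apply]
  norm_num

theorem apply_two_apply_neg_two (hL : VirasoroFamily c L) (u : V) :
    L 2 (L (-2) u) = L (-2) (L 2 u) + (4 : ℂ) • L 0 u + (c / 2) • u := by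
  rw [hL.apply_apply]
  norm_num
  ring_nf

theorem apply_zero_apply_of_apply_zero_eq_smul (hL : VirasoroFamily c L) {μ : ℂ} {u : V}
    (hu : L 0 u = μ • u) (n : ℤ) : L 0 (L n u) = (μ - n) • L n u := by
  rw [hL.apply_apply, hu, map_smul]
  simp only [zero_add, Int.cast_zero, zero_mul, mul_zero, ite_self, zero_smul, add_zero]
  module

theorem apply_eq_zero_of_apply_one_of_apply_two (hL : VirasoroFamily c L) {w : V}
    (h₁ : L 1 w = 0) (h₂ : L 2 w = 0) (m : ℤ) (hm : 1 ≤ m) : L m w = 0 := by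
  induction m, hm using Int.leInduction with
  | base => exact h₁
  | succ n hn ih =>
    obtain rfl | hn := hn.eq_or_lt
    · exact h₂
    have h := hL.apply_apply_of_add_ne_zero (m := n) (n := 1) (by omega) w
    rw [h₁, map_zero, ih, map_zero, zero_add, eq_comm, smul_eq_zero] at h
    exact h.resolve_left (sub_ne_zero.mpr (by exact_mod_cast hn.ne'))

end VirasoroFamily

namespace IsHighestWeightVector

variable {V : Type*} [AddCommGroup V] [Module ℂ V] {c h : ℂ} {L : ℤ → Module.End ℂ V} {v : V}

theorem apply_apply_of_add_ne_zero (hL : VirasoroFamily c L) (hv : IsHighestWeightVector L h v)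
    {m n : ℤ} (hm : 1 ≤ m) (hmn : m + n ≠ 0) : L m (L n v) = ((m : ℂ) - n) • L (m + n) v := by
  rw [hL.apply_apply_of_add_ne_zero hmn, hv.1 m hm, map_zero, zero_add]

theorem apply_zero_pow (hL : VirasoroFamily c L) (hv : IsHighestWeightVector L h v) (k : ℕ) :
    L 0 (((L (-1)) ^ k) v) = (h + k) • ((L (-1)) ^ k) v := by
  induction k with
  | zero => simp [hv.2]
  | succ k ih =>
    rw [pow_succ', Module.End.mul_apply, hL.apply_zero_apply_of_apply_zero_eq_smul ih]
    push_cast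
    ring_nf

theorem apply_one_pow_succ (hL : VirasoroFamily c L) (hv : IsHighestWeightVector L h v)
    (k : ℕ) : L 1 (((L (-1)) ^ (k + 1)) v) = (((k : ℂ) + 1) * (2 * h + k)) • ((L (-1)) ^ k) v := by
  induction k with
  | zero =>
    rw [pow_one, hL.apply_one_apply_neg_one, hv.1 1 le_rfl, map_zero, hv.2]
    simp only [pow_zero, Module.End.one_apply]
    module
  | succ k ih =>
    rw [pow_succ', Module.End.mul_apply, hL.apply_one_apply_neg_one, ih, map_smul,
      hv.apply_zero_pow hL, ← Module.End.mul_apply, ← pow_succ']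
    push_cast
    module

theorem apply_two_pow_add_two (hL : VirasoroFamily c L) (hv : IsHighestWeightVector L h v)
    (k : ℕ) : L 2 (((L (-1)) ^ (k + 2)) v)
      = (((k : ℂ) + 2) * (k + 1) * (3 * h + k)) • ((L (-1)) ^ k) v := by
  have comm (u : V) : L 2 (L (-1) u) = L (-1) (L 2 u) + (3 : ℂ) • L 1 u := by
    rw [hL.apply_apply_of_add_ne_zero (m := 2) (n := -1) (by norm_num)]
    norm_num
  induction k with
  | zero =>
    have h₂ : L 2 (L (-1) v) = 0 := by
      rw [comm, hv.1 2 (by norm_num), hv.1 1 le_rfl, map_zero, smul_zero, add_zero]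
    rw [pow_two, Module.End.mul_apply, comm, h₂, map_zero, zero_add,
      ← pow_one (L (-1)), hv.apply_one_pow_succ hL 0]
    simp only [pow_zero, Module.End.one_apply]
    module
  | succ k ih =>
    rw [pow_succ', Module.End.mul_apply, comm, ih, map_smul, hv.apply_one_pow_succ hL,
      ← Module.End.mul_apply, ← pow_succ']
    push_cast
    module

theorem apply_one_level_four (hL : VirasoroFamily c L) (hv : IsHighestWeightVector L h v)
    (a b d e : ℂ) :
    L 1 (((L (-1)) ^ 4) v + a • L (-2) (((L (-1)) ^ 2) v) + b • ((L (-2)) ^ 2) v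
        + d • L (-3) (L (-1) v) + e • L (-4) v)
      = (8 * h + 12 + 3 * a) • ((L (-1)) ^ 3) v
        + ((4 * h + 2) * a + 6 * b + 4 * d) • L (-2) (L (-1) v)
        + (3 * b + 2 * h * d + 5 * e) • L (-3) v := by
  have comm₂ (u : V) : L 1 (L (-2) u) = L (-2) (L 1 u) + (3 : ℂ) • L (-1) u := by
    rw [hL.apply_apply_of_add_ne_zero (m := 1) (n := -2) (by norm_num)]
    norm_num
  have comm₃ (u : V) : L 1 (L (-3) u) = L (-3) (L 1 u) + (4 : ℂ) • L (-2) u := by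
    rw [hL.apply_apply_of_add_ne_zero (m := 1) (n := -3) (by norm_num)]
    norm_num
  have comm₁₂ : L (-1) (L (-2) v) = L (-2) (L (-1) v) + L (-3) v := by
    rw [hL.apply_apply_of_add_ne_zero (m := -1) (n := -2) (by norm_num)]
    norm_num
  have hv₁ : L 1 (L (-1) v) = (2 * h) • v := by
    simpa using hv.apply_one_pow_succ hL 0
  have h₁ : L 1 (((L (-1)) ^ 4) v) = (8 * h + 12) • ((L (-1)) ^ 3) v := by
    rw [hv.apply_one_pow_succ hL 3]
    norm_num
    ring_nf
  have h₂ : L 1 (L (-2) (((L (-1)) ^ 2) v))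
      = (4 * h + 2) • L (-2) (L (-1) v) + (3 : ℂ) • ((L (-1)) ^ 3) v := by
    rw [comm₂, hv.apply_one_pow_succ hL 1, ← Module.End.mul_apply, ← pow_succ']
    norm_num
    module
  have h₃ : L 1 (((L (-2)) ^ 2) v) = (6 : ℂ) • L (-2) (L (-1) v) + (3 : ℂ) • L (-3) v := by
    rw [sq, Module.End.mul_apply, comm₂, comm₂, hv.1 1 le_rfl, map_zero, zero_add, map_smul,
      comm₁₂]
    module
  have h₄ : L 1 (L (-3) (L (-1) v)) = (2 * h) • L (-3) v + (4 : ℂ) • L (-2) (L (-1) v) := by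
    rw [comm₃, hv₁, map_smul]
  have h₅ : L 1 (L (-4) v) = (5 : ℂ) • L (-3) v := by
    rw [hv.apply_apply_of_add_ne_zero hL le_rfl (by norm_num)]
    norm_num
  simp only [map_add, map_smul, h₁, h₂, h₃, h₄, h₅]
  module

theorem apply_two_level_four (hL : VirasoroFamily c L) (hv : IsHighestWeightVector L h v)
    (a b d e : ℂ) :
    L 2 (((L (-1)) ^ 4) v + a • L (-2) (((L (-1)) ^ 2) v) + b • ((L (-2)) ^ 2) v
        + d • L (-3) (L (-1) v) + e • L (-4) v)
      = (36 * h + 24 + (4 * h + 8 + c / 2) * a + 5 * d) • ((L (-1)) ^ 2) v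
        + (6 * h * a + (8 * h + 8 + c) * b + 6 * e) • L (-2) v := by
  have comm₃ (u : V) : L 2 (L (-3) u) = L (-3) (L 2 u) + (5 : ℂ) • L (-1) u := by
    rw [hL.apply_apply_of_add_ne_zero (m := 2) (n := -3) (by norm_num)]
    norm_num
  have hv₁ : L 2 (L (-1) v) = 0 := by
    rw [hv.apply_apply_of_add_ne_zero hL (m := 2) (n := -1) (by norm_num) (by norm_num),
      hv.1 _ (by norm_num), smul_zero]
  have hv₂ : L 2 (((L (-1)) ^ 2) v) = (6 * h) • v := by
    rw [hv.apply_two_pow_add_two hL 0]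
    norm_num
    ring_nf
  have hv₃ : L 2 (L (-2) v) = (4 * h + c / 2) • v := by
    rw [hL.apply_two_apply_neg_two, hv.1 2 (by norm_num), map_zero, hv.2]
    module
  have h₁ : L 2 (((L (-1)) ^ 4) v) = (36 * h + 24) • ((L (-1)) ^ 2) v := by
    rw [hv.apply_two_pow_add_two hL 2]
    norm_num
    ring_nf
  have h₂ : L 2 (L (-2) (((L (-1)) ^ 2) v))
      = (6 * h) • L (-2) v + (4 * h + 8 + c / 2) • ((L (-1)) ^ 2) v := by
    rw [hL.apply_two_apply_neg_two, hv₂, map_smul, hv.apply_zero_pow hL 2]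
    push_cast
    module
  have h₃ : L 2 (((L (-2)) ^ 2) v) = (8 * h + 8 + c) • L (-2) v := by
    rw [sq, Module.End.mul_apply, hL.apply_two_apply_neg_two, hv₃, map_smul,
      hL.apply_zero_apply_of_apply_zero_eq_smul hv.2]
    push_cast
    module
  have h₄ : L 2 (L (-3) (L (-1) v)) = (5 : ℂ) • ((L (-1)) ^ 2) v := by
    rw [comm₃, hv₁, map_zero, zero_add, sq, Module.End.mul_apply]
  have h₅ : L 2 (L (-4) v) = (6 : ℂ) • L (-2) v := by
    rw [hv.apply_apply_of_add_ne_zero hL (by norm_num) (by norm_num)]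
    norm_num
  simp only [map_add, map_smul, h₁, h₂, h₃, h₄, h₅]
  module

end IsHighestWeightVector

/-- `P_{2,2}(t) = L_{−1}⁴ − 2(t+t⁻¹)L_{−2}L_{−1}² + (t²−2+t⁻²)L_{−2}²
− 2(t−3+t⁻¹)L_{−3}L_{−1} − 3(t−2+t⁻¹)L_{−4}` produces the level-4 singular vector
at the highest weight `(c(t), h_{2,2}(t))`. -/
theorem P22_singular_vector {V : Type*} [AddCommGroup V] [Module ℂ V]
    (t₀ : ℂ) (ht₀ : t₀ ≠ 0) (L : ℤ → Module.End ℂ V)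
    (hL : VirasoroFamily (13 - 6 * (t₀ + t₀⁻¹)) L)
    (v : V)
    (hv : IsHighestWeightVector L
      ((((2 : ℂ) - 2 * t₀) ^ 2 - (t₀ - 1) ^ 2) / (4 * t₀)) v) :
    ∀ m : ℤ, 1 ≤ m →
      L m (((L (-1)) ^ 4) v
        - (2 * (t₀ + t₀⁻¹)) • (L (-2)) (((L (-1)) ^ 2) v)
        + (t₀ ^ 2 - 2 + (t₀ ^ 2)⁻¹) • ((L (-2)) ^ 2) v
        - (2 * (t₀ - 3 + t₀⁻¹)) • (L (-3)) ((L (-1)) v)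
        - (3 * (t₀ - 2 + t₀⁻¹)) • (L (-4)) v) = 0 := by
  intro m hm
  simp only [sub_eq_add_neg, ← neg_smul]
  refine hL.apply_eq_zero_of_apply_one_of_apply_two ?_ ?_ m hm
  · rw [hv.apply_one_level_four hL]
    match_scalars <;> field_simp <;> ring
  · rw [hv.apply_two_level_four hL]
    match_scalars <;> field_simp <;> ring
end
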